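/- Let k be a field, ℓ ≥ 2 an integer, and q ∈ k a primitive ℓ-th root of unity. Let B be an associative unital k-algebra and a, b, c ∈ B elements satisfying a·b = b·a, c·a = q·a·c, c·b = q·b·c, and a^i·c^{ℓ−i} = 0 = b^i·c^{ℓ−i} for all i = 0, 1, …, ℓ. Then exp_q(a)·exp_q(b + c) = exp_q(b)·exp_q(a + c), where exp_q(z) = Σ_{m=0}^{ℓ−1} z^m/[m]_q!. -/

import Mathlib

/-- The q-integer `[m]_q = 1 + q + ⋯ + q^{m−1}`. -/
def qInt {k : Type*} [Field k] (q : k) (m : ℕ) : k := ∑ i ∈ Finset.range m, q ^ i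

/-- The q-factorial `[m]_q! = [1]_q [2]_q ⋯ [m]_q` (with `[0]_q! = 1`). -/
def qFactorial {k : Type*} [Field k] (q : k) (m : ℕ) : k :=
  ∏ i ∈ Finset.range m, qInt q (i + 1)

/-- The (truncated) q-exponential `exp_q(z) = Σ_{m=0}^{ℓ−1} z^m/[m]_q!` of an element of a
`k`-algebra. -/
noncomputable def qExp {k : Type*} [Field k] (q : k) (ℓ : ℕ)
    {B : Type*} [Ring B] [Algebra k B] (z : B) : B :=
  ∑ m ∈ Finset.range ℓ, (qFactorial q m)⁻¹ • z ^ m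

namespace QExpAux

variable {k : Type*} [Field k]

/-- Gaussian binomial coefficient defined by the q-Pascal recursion. -/
def gb (q : k) : ℕ → ℕ → k
  | 0, 0 => 1
  | 0, _+1 => 0
  | N+1, 0 => gb q N 0
  | N+1, m+1 => gb q N m + q ^ (m+1) * gb q N (m+1)

lemma gb_zero (q : k) : ∀ N, gb q N 0 = 1
  | 0 => rfl
  | N+1 => gb_zero q N

lemma gb_eq_zero (q : k) : ∀ N m, N < m → gb q N m = 0
  | 0, _+1, _ => rfl
  | N+1, m+1, h => by
      rw [gb, gb_eq_zero q N m (by omega), gb_eq_zero q N (m+1) (by omega)]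
      ring

lemma qFactorial_succ (q : k) (n : ℕ) :
    qFactorial q (n+1) = qFactorial q n * qInt q (n+1) :=
  Finset.prod_range_succ _ _

lemma qInt_add (q : k) (m n : ℕ) : qInt q (m + n) = qInt q m + q ^ m * qInt q n := by
  induction n with
  | zero => simp [qInt]
  | succ n ih =>
    have h1 : m + (n + 1) = (m + n) + 1 := by omega
    have h2 : ∀ r : ℕ, qInt q (r + 1) = qInt q r + q ^ r := fun r =>
      Finset.sum_range_succ _ _
    rw [h1, h2, ih, h2]
    ring

lemma gb_mul_fac (q : k) : ∀ N m, m ≤ N →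
    gb q N m * (qFactorial q m * qFactorial q (N - m)) = qFactorial q N := by
  intro N
  induction N with
  | zero =>
    intro m hm
    interval_cases m
    simp [gb, qFactorial]
  | succ N ih =>
    intro m hm
    cases m with
    | zero =>
      simp [gb_zero, qFactorial]
    | succ m =>
      have hm' : m ≤ N := by omega
      rw [gb]
      rcases eq_or_lt_of_le hm' with rfl | hlt
      · -- m = N (after substitution N becomes m)
        have h0 : (m + 1) - (m + 1) = 0 := by omega
        rw [gb_eq_zero q m (m+1) (by omega), h0]
        have ihN := ih m le_rfl
        simp only [Nat.sub_self] at ihN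
        rw [qFactorial_succ q m]
        have hfac0 : qFactorial q 0 = 1 := by simp [qFactorial]
        rw [hfac0] at ihN ⊢
        linear_combination qInt q (m+1) * ihN
      · -- m + 1 ≤ N
        have hu : N - m = (N - (m+1)) + 1 := by omega
        have hs : (N + 1) - (m + 1) = (N - (m+1)) + 1 := by omega
        have ih1 := ih m hm'
        have ih2 := ih (m+1) hlt
        rw [hu, qFactorial_succ q (N - (m+1))] at ih1
        rw [hs, qFactorial_succ q N, qFactorial_succ q m, qFactorial_succ q (N - (m+1))]
        rw [qFactorial_succ q m] at ih2
        have hγ : qInt q (N+1) = qInt q (m+1) + q ^ (m+1) * qInt q ((N - (m+1)) + 1) := by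
          have : N + 1 = (m+1) + ((N - (m+1)) + 1) := by omega
          rw [this, qInt_add]
        linear_combination qInt q (m+1) * ih1 + q^(m+1) * qInt q ((N - (m+1)) + 1) * ih2
          - qFactorial q N * hγ

variable {B : Type*} [Ring B] [Algebra k B]

lemma c_mul_pow (q : k) {a c : B} (hca : c * a = q • (a * c)) :
    ∀ m, c * a ^ m = q ^ m • (a ^ m * c)
  | 0 => by simp
  | m+1 => by
    rw [pow_succ, ← mul_assoc, c_mul_pow q hca m, smul_mul_assoc, mul_assoc, hca,
      mul_smul_comm, smul_smul, pow_succ, mul_assoc]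

lemma add_pow_q (q : k) {a c : B} (hca : c * a = q • (a * c)) (N : ℕ) :
    (a + c) ^ N = ∑ m ∈ Finset.range (N+1), gb q N m • (a ^ m * c ^ (N - m)) := by
  induction N with
  | zero => simp [gb]
  | succ N ih =>
    have hterm : ∀ m, (a + c) * (gb q N m • (a ^ m * c ^ (N - m)))
        = gb q N m • (a ^ (m+1) * c ^ (N - m))
          + (q ^ m * gb q N m) • (a ^ m * c ^ ((N - m) + 1)) := by
      intro m
      have e1 : a * (a ^ m * c ^ (N - m)) = a ^ (m+1) * c ^ (N - m) := by
        rw [← mul_assoc, ← pow_succ']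
      have e2 : c * (a ^ m * c ^ (N - m)) = q ^ m • (a ^ m * c ^ ((N - m) + 1)) := by
        rw [← mul_assoc, c_mul_pow q hca m, smul_mul_assoc, mul_assoc, ← pow_succ']
      rw [add_mul, mul_smul_comm, mul_smul_comm, e1, e2, smul_smul,
        mul_comm (gb q N m) (q ^ m)]
    have hL : (a + c) ^ (N+1)
        = (∑ m ∈ Finset.range (N+1), gb q N m • (a ^ (m+1) * c ^ (N - m)))
          + ∑ m ∈ Finset.range (N+1), (q ^ m * gb q N m) • (a ^ m * c ^ ((N+1) - m)) := by
      rw [pow_succ', ih, Finset.mul_sum,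
        Finset.sum_congr rfl fun m _ => hterm m, Finset.sum_add_distrib]
      congr 1
      apply Finset.sum_congr rfl
      intro m hm
      simp only [Finset.mem_range] at hm
      rw [show (N - m) + 1 = (N+1) - m from by omega]
    rw [hL, Finset.sum_range_succ' (fun m => gb q (N+1) m • (a ^ m * c ^ ((N+1) - m)))]
    have h1 : ∀ m ∈ Finset.range (N+1),
        gb q (N+1) (m+1) • (a ^ (m+1) * c ^ ((N+1) - (m+1)))
          = gb q N m • (a ^ (m+1) * c ^ (N - m))
            + (q ^ (m+1) * gb q N (m+1)) • (a ^ (m+1) * c ^ (N - m)) := by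
      intro m hm
      rw [show (N+1) - (m+1) = N - m from by omega, gb, add_smul]
    rw [Finset.sum_congr rfl h1, Finset.sum_add_distrib]
    have hS2 : (∑ m ∈ Finset.range (N+1), (q ^ m * gb q N m) • (a ^ m * c ^ ((N+1) - m)))
        = (∑ m ∈ Finset.range (N+1),
            (q ^ (m+1) * gb q N (m+1)) • (a ^ (m+1) * c ^ (N - m)))
          + gb q (N+1) 0 • (a ^ 0 * c ^ ((N+1) - 0)) := by
      rw [Finset.sum_range_succ'
        (fun m => (q ^ m * gb q N m) • (a ^ m * c ^ ((N+1) - m)))]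
      congr 1
      · rw [Finset.sum_range_succ
          (fun m => (q ^ (m+1) * gb q N (m+1)) • (a ^ (m+1) * c ^ (N - m))),
          gb_eq_zero q N (N+1) (by omega)]
        simp only [mul_zero, zero_smul, add_zero]
        apply Finset.sum_congr rfl
        intro m hm
        rw [show (N+1) - (m+1) = N - m from by omega]
      · simp [gb_zero]
    rw [hS2]
    abel

lemma triangle {M : Type*} [AddCommMonoid M] (F : ℕ → ℕ → M) (n : ℕ) :
    ∑ N ∈ Finset.range n, ∑ m ∈ Finset.range (N+1), F m (N - m)
      = ∑ m ∈ Finset.range n, ∑ j ∈ Finset.range (n - m), F m j := by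
  induction n with
  | zero => simp
  | succ n ih =>
    rw [Finset.sum_range_succ, ih,
      Finset.sum_range_succ (fun m => ∑ j ∈ Finset.range ((n+1) - m), F m j)]
    have h1 : ∀ m ∈ Finset.range n, ∑ j ∈ Finset.range ((n+1) - m), F m j
        = ∑ j ∈ Finset.range (n - m), F m j + F m (n - m) := by
      intro m hm
      simp only [Finset.mem_range] at hm
      have : (n+1) - m = (n - m) + 1 := by omega
      rw [this, Finset.sum_range_succ]
    rw [Finset.sum_congr rfl h1, Finset.sum_add_distrib,
      Finset.sum_range_succ (fun m => F m (n - m))]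
    rw [show (n+1) - n = 1 from by omega, Finset.sum_range_one, Nat.sub_self]
    abel

lemma qInt_ne_zero (q : k) (ℓ : ℕ) (hℓ : 2 ≤ ℓ) (hq : IsPrimitiveRoot q ℓ)
    {m : ℕ} (h0 : 0 < m) (h1 : m < ℓ) : qInt q m ≠ 0 := by
  have hq1 : q ≠ 1 := hq.ne_one (by omega)
  have : qInt q m = (q ^ m - 1) / (q - 1) := geom_sum_eq hq1 m
  rw [this]
  have hqm : q ^ m ≠ 1 := hq.pow_ne_one_of_pos_of_lt h0.ne' h1
  intro hcontr
  rcases div_eq_zero_iff.mp hcontr with h | h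
  · exact hqm (sub_eq_zero.mp h)
  · exact hq1 (sub_eq_zero.mp h)

lemma qFactorial_ne_zero (q : k) (ℓ : ℕ) (hℓ : 2 ≤ ℓ) (hq : IsPrimitiveRoot q ℓ)
    {m : ℕ} (h : m < ℓ) : qFactorial q m ≠ 0 := by
  rw [qFactorial]
  apply Finset.prod_ne_zero_iff.mpr
  intro i hi
  simp only [Finset.mem_range] at hi
  exact qInt_ne_zero q ℓ hℓ hq (by omega) (by omega)

lemma qExp_add_of_comm (q : k) (ℓ : ℕ) (hℓ : 2 ≤ ℓ) (hq : IsPrimitiveRoot q ℓ)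
    (a c : B) (hca : c * a = q • (a * c))
    (hnil : ∀ i : ℕ, i ≤ ℓ → a ^ i * c ^ (ℓ - i) = 0) :
    qExp q ℓ (a + c) = qExp q ℓ a * qExp q ℓ c := by
  set F : ℕ → ℕ → B := fun m n =>
    ((qFactorial q m)⁻¹ * (qFactorial q n)⁻¹) • (a ^ m * c ^ n) with hF
  have hFvanish : ∀ m n, m < ℓ → ℓ ≤ m + n → F m n = 0 := by
    intro m n hm hmn
    have hsplit : c ^ n = c ^ (ℓ - m) * c ^ (n - (ℓ - m)) := by
      rw [← pow_add]
      congr 1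
      omega
    have : a ^ m * c ^ n = 0 := by
      rw [hsplit, ← mul_assoc, hnil m (by omega), zero_mul]
    rw [hF]
    simp only [this, smul_zero]
  -- LHS
  have hLHS : qExp q ℓ (a + c)
      = ∑ N ∈ Finset.range ℓ, ∑ m ∈ Finset.range (N+1), F m (N - m) := by
    rw [qExp]
    apply Finset.sum_congr rfl
    intro N hN
    simp only [Finset.mem_range] at hN
    rw [add_pow_q q hca N, Finset.smul_sum]
    apply Finset.sum_congr rfl
    intro m hm
    simp only [Finset.mem_range] at hm
    rw [hF, smul_smul]
    congr 1
    have hfN := qFactorial_ne_zero q ℓ hℓ hq hN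
    have hfm := qFactorial_ne_zero q ℓ hℓ hq (show m < ℓ by omega)
    have hfnm := qFactorial_ne_zero q ℓ hℓ hq (show N - m < ℓ by omega)
    have hgb := gb_mul_fac q N m (by omega)
    field_simp
    linear_combination hgb
  -- RHS
  have hRHS : qExp q ℓ a * qExp q ℓ c
      = ∑ m ∈ Finset.range ℓ, ∑ n ∈ Finset.range ℓ, F m n := by
    rw [qExp, qExp, Finset.sum_mul_sum]
    apply Finset.sum_congr rfl
    intro m _
    apply Finset.sum_congr rfl
    intro n _
    rw [hF, smul_mul_smul_comm]
  rw [hLHS, hRHS, triangle]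
  apply Finset.sum_congr rfl
  intro m hm
  simp only [Finset.mem_range] at hm
  apply Finset.sum_subset
  · apply Finset.range_subset_range.mpr; omega
  · intro n hn hn'
    simp only [Finset.mem_range] at hn hn'
    exact hFvanish m n hm (by omega)

lemma qExp_comm (q : k) (ℓ : ℕ) (a b : B) (hab : a * b = b * a) :
    qExp q ℓ a * qExp q ℓ b = qExp q ℓ b * qExp q ℓ a := by
  have hcomm : Commute a b := hab
  have : Commute (qExp q ℓ a) (qExp q ℓ b) := by
    apply Commute.sum_left
    intro m _
    apply Commute.sum_right
    intro n _
    exact ((hcomm.pow_pow m n).smul_left _).smul_right _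
  exact this

end QExpAux

/-- If `q` is a primitive `ℓ`-th root of unity (`ℓ ≥ 2`) and `a, b, c` satisfy `a·b = b·a`,
`c·a = q·a·c`, `c·b = q·b·c` and `a^i c^{ℓ−i} = 0 = b^i c^{ℓ−i}` for `i = 0, …, ℓ`, then
`exp_q(a)·exp_q(b + c) = exp_q(b)·exp_q(a + c)`. -/
theorem qExp_exchange {k : Type*} [Field k] (q : k) (ℓ : ℕ) (hℓ : 2 ≤ ℓ)
    (hq : IsPrimitiveRoot q ℓ)
    {B : Type*} [Ring B] [Algebra k B] (a b c : B)
    (hab : a * b = b * a)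
    (hca : c * a = q • (a * c))
    (hcb : c * b = q • (b * c))
    (hnila : ∀ i : ℕ, i ≤ ℓ → a ^ i * c ^ (ℓ - i) = 0)
    (hnilb : ∀ i : ℕ, i ≤ ℓ → b ^ i * c ^ (ℓ - i) = 0) :
    qExp q ℓ a * qExp q ℓ (b + c) = qExp q ℓ b * qExp q ℓ (a + c) := by
  rw [QExpAux.qExp_add_of_comm q ℓ hℓ hq b c hcb hnilb,
    QExpAux.qExp_add_of_comm q ℓ hℓ hq a c hca hnila,
    ← mul_assoc, ← mul_assoc, QExpAux.qExp_comm q ℓ a b hab]
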